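/- Let ψ be a constant with 0 < ψ < 2 and suppose R, R_d ∈ SO(3) satisfy Ψ(R,R_d) < ψ. Then Ψ(R,R_d) ≤ (1/(2−ψ))‖e_R‖², where e_R = ((1/2)(R_dᵀR − RᵀR_d))ᵛ. -/

import Mathlib

open Matrix
noncomputable section

/-- `SO3 R` : `R` is a rotation matrix. -/
def SO3 (R : Matrix (Fin 3) (Fin 3) ℝ) : Prop := Rᵀ * R = 1 ∧ R.det = 1

/-- Attitude error function `Ψ(R,R_d) = ½ tr(I − R_dᵀ R)`. -/
def Psi (R Rd : Matrix (Fin 3) (Fin 3) ℝ) : ℝ := (1/2) * (1 - Rdᵀ * R).trace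

/-- The hat map identifying `ℝ³` with skew-symmetric matrices. -/
def hat (x : Fin 3 → ℝ) : Matrix (Fin 3) (Fin 3) ℝ :=
  !![0, -x 2, x 1; x 2, 0, -x 0; -x 1, x 0, 0]

/-- The vee map, inverse of the hat map on skew-symmetric matrices. -/
def vee (A : Matrix (Fin 3) (Fin 3) ℝ) : Fin 3 → ℝ := ![A 2 1, A 0 2, A 1 0]

/-- Attitude error vector `e_R = (½ (R_dᵀ R − Rᵀ R_d))ᵛ`. -/
def eR (R Rd : Matrix (Fin 3) (Fin 3) ℝ) : Fin 3 → ℝ :=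
  vee ((1/2 : ℝ) • (Rdᵀ * R - Rᵀ * Rd))

/-- Euclidean dot product on `ℝ³`. -/
def dot (x y : Fin 3 → ℝ) : ℝ := ∑ i, x i * y i

/-- Euclidean norm on `ℝ³`. -/
def enorm (x : Fin 3 → ℝ) : ℝ := Real.sqrt (dot x x)

/-- Cross product on `ℝ³`. -/
def cross (x y : Fin 3 → ℝ) : Fin 3 → ℝ :=
  ![x 1 * y 2 - x 2 * y 1, x 2 * y 0 - x 0 * y 2, x 0 * y 1 - x 1 * y 0]

/-!
For `Q = R_dᵀ R ∈ SO(3)` we have `‖e_R‖² = (tr(QᵀQ) − tr(Q²))/4`, and the Newton identity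
`tr(Q²) + 2 tr(adj Q) = (tr Q)²` together with `adj Q = Qᵀ` turns this into the exact identity
`‖e_R‖² = Ψ (2 − Ψ)`. Since `Ψ ≥ 0` and `2 − Ψ > 2 − ψ > 0`, the bound follows.
-/

lemma trace_mul_self_add_two_mul_trace_adjugate {α : Type*} [CommRing α]
    (A : Matrix (Fin 3) (Fin 3) α) :
    (A * A).trace + 2 * (adjugate A).trace = A.trace ^ 2 := by
  simp only [trace_fin_three, mul_apply, Fin.sum_univ_three, adjugate_fin_three, of_apply,
    cons_val', cons_val_zero, cons_val_fin_one, cons_val_one, cons_val]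
  ring

lemma dot_vee_skew_part (Q : Matrix (Fin 3) (Fin 3) ℝ) :
    dot (vee ((1/2 : ℝ) • (Q - Qᵀ))) (vee ((1/2 : ℝ) • (Q - Qᵀ))) =
      ((Qᵀ * Q).trace - (Q * Q).trace) / 4 := by
  simp only [dot, vee, Matrix.smul_apply, Matrix.sub_apply, transpose_apply, smul_eq_mul,
    Fin.sum_univ_three,
    cons_val_zero, cons_val_one, cons_val, trace_fin_three, mul_apply]
  ring

namespace SO3

lemma transpose_mul {R Rd : Matrix (Fin 3) (Fin 3) ℝ} (hR : SO3 R) (hRd : SO3 Rd) :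
    SO3 (Rdᵀ * R) := by
  refine ⟨?_, by rw [det_mul, det_transpose, hR.2, hRd.2, mul_one]⟩
  calc (Rdᵀ * R)ᵀ * (Rdᵀ * R) = Rᵀ * (Rd * Rdᵀ) * R := by
        rw [Matrix.transpose_mul, transpose_transpose]; noncomm_ring
    _ = 1 := by rw [mul_eq_one_comm.mp hRd.1, Matrix.mul_one, hR.1]

lemma adjugate_eq_transpose {Q : Matrix (Fin 3) (Fin 3) ℝ} (hQ : SO3 Q) :
    adjugate Q = Qᵀ :=
  calc adjugate Q = (Qᵀ * Q) * adjugate Q := by rw [hQ.1, Matrix.one_mul]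
    _ = Qᵀ * (Q * adjugate Q) := Matrix.mul_assoc _ _ _
    _ = Qᵀ := by rw [mul_adjugate, hQ.2, one_smul, Matrix.mul_one]

lemma trace_mul_self {Q : Matrix (Fin 3) (Fin 3) ℝ} (hQ : SO3 Q) :
    (Q * Q).trace = Q.trace ^ 2 - 2 * Q.trace := by
  have h := trace_mul_self_add_two_mul_trace_adjugate Q
  rw [hQ.adjugate_eq_transpose, trace_transpose] at h
  linarith

end SO3

lemma psi_eq_three_sub_trace (R Rd : Matrix (Fin 3) (Fin 3) ℝ) :
    Psi R Rd = (3 - (Rdᵀ * R).trace) / 2 := by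
  rw [Psi, trace_sub, trace_one, Fintype.card_fin]
  push_cast
  ring

lemma dot_self_nonneg (x : Fin 3 → ℝ) : 0 ≤ dot x x :=
  Finset.sum_nonneg fun i _ => mul_self_nonneg (x i)

lemma enorm_eR_sq {R Rd : Matrix (Fin 3) (Fin 3) ℝ} (hR : SO3 R) (hRd : SO3 Rd) :
    _root_.enorm (eR R Rd) ^ 2 = Psi R Rd * (2 - Psi R Rd) := by
  have hQ := hR.transpose_mul hRd
  have hdot := dot_vee_skew_part (Rdᵀ * R)
  rw [hQ.1, hQ.trace_mul_self, Matrix.transpose_mul, transpose_transpose] at hdot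
  rw [_root_.enorm, Real.sq_sqrt (dot_self_nonneg _), eR, hdot, psi_eq_three_sub_trace, trace_one,
    Fintype.card_fin]
  push_cast
  ring

theorem psi_le_eR_sq_general (R Rd : Matrix (Fin 3) (Fin 3) ℝ) (ψ : ℝ)
    (hR : SO3 R) (hRd : SO3 Rd) (hψ2 : ψ < 2)
    (hPsi : Psi R Rd < ψ) :
    Psi R Rd ≤ (1 / (2 - ψ)) * _root_.enorm (eR R Rd) ^ 2 := by
  have hsq := enorm_eR_sq hR hRd
  have hPsi0 : 0 ≤ Psi R Rd := by nlinarith [sq_nonneg (_root_.enorm (eR R Rd))]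
  rw [hsq, one_div_mul_eq_div, le_div_iff₀ (by linarith)]
  nlinarith

theorem psi_le_eR_sq (R Rd : Matrix (Fin 3) (Fin 3) ℝ) (ψ : ℝ)
    (hR : SO3 R) (hRd : SO3 Rd) (hψ0 : 0 < ψ) (hψ2 : ψ < 2)
    (hPsi : Psi R Rd < ψ) :
    Psi R Rd ≤ (1 / (2 - ψ)) * _root_.enorm (eR R Rd) ^ 2 :=
  psi_le_eR_sq_general R Rd ψ hR hRd hψ2 hPsi
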